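/- arXiv:math/0703142 — 7 statements merged into one kernel-verified Lean document; each statement's English description precedes it below -/
import Mathlib

section
/- The pair (C_1, C_2) of Latin squares of order 3 on ZMod 3 is orthogonal, and every ordered pair of orthogonal Latin squares of order 3 is ∼'-equivalent to (C_1, C_2); hence the set of ∼'-equivalence classes of ordered pairs of orthogonal Latin squares of order 3 has exactly one element. -/
/-- A Latin square of order `k` (rows, columns and symbols drawn from the same
`k`-element type, e.g. `Fin k` or `ZMod k`): every row and every column is a
bijection. -/
def IsLatinSquare {α : Type*} (L : α → α → α) : Prop :=
  (∀ i, Function.Bijective fun j => L i j) ∧ (∀ j, Function.Bijective fun i => L i j)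

/-- Two squares are orthogonal if `(i, j) ↦ (L i j, L' i j)` is a bijection. -/
def IsOrthogonal {α : Type*} (L L' : α → α → α) : Prop :=
  Function.Bijective fun p : α × α => (L p.1 p.2, L' p.1 p.2)

/-- The relation `∼` on Latin squares: `L ∼ L'` iff `L'` is obtained from `L` by
permuting rows, permuting columns and relabelling symbols. -/
def LatinEquiv {α : Type*} (L L' : α → α → α) : Prop :=
  ∃ a b c : Equiv.Perm α, ∀ i j, L' i j = c (L (a i) (b j))

/-- One elementary move on an ordered pair of squares: simultaneous row
permutation, simultaneous column permutation, relabelling the symbols of either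
square, transposing either square, or interchanging the squares. -/
inductive PairStep {α : Type*} :
    ((α → α → α) × (α → α → α)) → ((α → α → α) × (α → α → α)) → Prop
  | rows (P : (α → α → α) × (α → α → α)) (a : Equiv.Perm α) :
      PairStep P (fun i j => P.1 (a i) j, fun i j => P.2 (a i) j)
  | cols (P : (α → α → α) × (α → α → α)) (b : Equiv.Perm α) :
      PairStep P (fun i j => P.1 i (b j), fun i j => P.2 i (b j))
  | relabelFst (P : (α → α → α) × (α → α → α)) (c : Equiv.Perm α) :
      PairStep P (fun i j => c (P.1 i j), P.2)
  | relabelSnd (P : (α → α → α) × (α → α → α)) (c : Equiv.Perm α) :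
      PairStep P (P.1, fun i j => c (P.2 i j))
  | transposeFst (P : (α → α → α) × (α → α → α)) :
      PairStep P (fun i j => P.1 j i, P.2)
  | transposeSnd (P : (α → α → α) × (α → α → α)) :
      PairStep P (P.1, fun i j => P.2 j i)
  | swap (P : (α → α → α) × (α → α → α)) :
      PairStep P (P.2, P.1)

/-- The equivalence relation `∼'` on ordered pairs of squares, generated by the
elementary moves `PairStep`. -/
def PairEquiv {α : Type*} (P Q : (α → α → α) × (α → α → α)) : Prop :=
  Relation.EqvGen PairStep P Q

/-- The cyclic square `C_c` on `ZMod k`: `C_c i j = j + c * i`. -/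
def Csq (k : ℕ) (c : ZMod k) : ZMod k → ZMod k → ZMod k :=
  fun i j => j + c * i

/-- Ordered pairs of orthogonal Latin squares of order `k`. -/
def OLSPair (k : ℕ) :=
  {P : (Fin k → Fin k → Fin k) × (Fin k → Fin k → Fin k) //
    IsLatinSquare P.1 ∧ IsLatinSquare P.2 ∧ IsOrthogonal P.1 P.2}

/-- `∼'` as a setoid on ordered pairs of orthogonal Latin squares. -/
def olsSetoid (k : ℕ) : Setoid (OLSPair k) where
  r P Q := PairEquiv P.val Q.val
  iseqv := ⟨fun _ => Relation.EqvGen.refl _,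
            fun h => Relation.EqvGen.symm _ _ h,
            fun h h' => Relation.EqvGen.trans _ _ _ h h'⟩

/-- A transversal of a square: a permutation `f` of the columns such that
`i ↦ L i (f i)` is injective (hits every symbol exactly once). -/
def IsTransversal {α : Type*} (L : α → α → α) (f : Equiv.Perm α) : Prop :=
  Function.Injective fun i => L i (f i)

/-- `L` admits `k` pairwise disjoint transversals. -/
def HasDisjointTransversals {k : ℕ} (L : Fin k → Fin k → Fin k) : Prop :=
  ∃ T : Fin k → Equiv.Perm (Fin k), (∀ m, IsTransversal L (T m)) ∧
    ∀ m m', m ≠ m' → ∀ i, T m i ≠ T m' i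

/-- `G'_k`: Latin squares whose successive-row permutations `σ_{i,i+1}` all
equal one common permutation which is a single `k`-cycle. -/
def GPrime (k : ℕ) : Set (Fin k → Fin k → Fin k) :=
  {L | IsLatinSquare L ∧ ∃ σ : Equiv.Perm (Fin k), σ.IsCycle ∧ σ.support.card = k ∧
    ∀ (i : ℕ) (h : i + 1 < k) (p : Fin k),
      σ (L ⟨i, Nat.lt_of_succ_lt h⟩ p) = L ⟨i + 1, h⟩ p}

/-- `G_k`: Latin squares `∼`-equivalent to an element of `G'_k`. -/
def GSet (k : ℕ) : Set (Fin k → Fin k → Fin k) :=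
  {L | ∃ H ∈ GPrime k, LatinEquiv L H}

/-- The cyclic square `C_1`, written on `Fin k` via the identification of
`ZMod k` with `Fin k`: `C_1 i j = j + i (mod k)`. -/
def C1fin (k : ℕ) : Fin k → Fin k → Fin k :=
  fun i j => ⟨(j.1 + i.1) % k, Nat.mod_lt _ i.pos⟩

/-
Permuting the columns of both squares and relabelling the second makes row `0` of both squares
the identity. In a Latin square of order 3 normalised this way, row `1` has no fixed point, so it
is a translation `j ↦ j + c` with `c ≠ 0`, and row `2` is forced to be `j ↦ j + 2c`: the square is
`C_1` or `C_2`. The two squares of an orthogonal pair differ, so after interchanging them if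
necessary the pair is `(C_1, C_2)`.
-/

section General

variable {α : Type*}

theorem PairEquiv.of_step {P Q : (α → α → α) × (α → α → α)} (h : PairStep P Q) :
    PairEquiv P Q :=
  Relation.EqvGen.rel _ _ h

theorem PairEquiv.trans {P Q R : (α → α → α) × (α → α → α)} (h₁ : PairEquiv P Q)
    (h₂ : PairEquiv Q R) : PairEquiv P R :=
  Relation.EqvGen.trans _ _ _ h₁ h₂

theorem IsLatinSquare.comp_cols {L : α → α → α} (hL : IsLatinSquare L) (b : Equiv.Perm α) :
    IsLatinSquare fun i j => L i (b j) :=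
  ⟨fun i => (hL.1 i).comp b.bijective, fun j => hL.2 (b j)⟩

theorem IsLatinSquare.relabel {L : α → α → α} (hL : IsLatinSquare L) (c : Equiv.Perm α) :
    IsLatinSquare fun i j => c (L i j) :=
  ⟨fun i => c.bijective.comp (hL.1 i), fun j => c.bijective.comp (hL.2 j)⟩

theorem IsOrthogonal.comp_cols {L L' : α → α → α} (h : IsOrthogonal L L') (b : Equiv.Perm α) :
    IsOrthogonal (fun i j => L i (b j)) (fun i j => L' i (b j)) :=
  h.comp (Equiv.prodCongr (Equiv.refl α) b).bijective

theorem IsOrthogonal.relabel_right {L L' : α → α → α} (h : IsOrthogonal L L')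
    (c : Equiv.Perm α) : IsOrthogonal L fun i j => c (L' i j) :=
  (Equiv.prodCongr (Equiv.refl α) c).bijective.comp h

theorem not_isOrthogonal_self [Nontrivial α] (L : α → α → α) : ¬ IsOrthogonal L L := by
  intro h
  obtain ⟨a, b, hab⟩ := exists_pair_ne α
  obtain ⟨p, hp⟩ := h.2 (a, b)
  exact hab ((Prod.ext_iff.1 hp).1.symm.trans (Prod.ext_iff.1 hp).2)

theorem exists_pairEquiv_row_eq_id {L L' : α → α → α} (hL : IsLatinSquare L)
    (hL' : IsLatinSquare L') (hO : IsOrthogonal L L') (a : α) :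
    ∃ M M' : α → α → α, PairEquiv (L, L') (M, M') ∧ IsLatinSquare M ∧ IsLatinSquare M' ∧
      IsOrthogonal M M' ∧ (∀ j, M a j = j) ∧ ∀ j, M' a j = j := by
  let b : Equiv.Perm α := (Equiv.ofBijective _ (hL.1 a)).symm
  have hN : IsLatinSquare fun i j => L' i (b j) := hL'.comp_cols b
  let c : Equiv.Perm α := (Equiv.ofBijective _ (hN.1 a)).symm
  refine ⟨fun i j => L i (b j), fun i j => c (L' i (b j)),
    (PairEquiv.of_step (.cols _ b)).trans (PairEquiv.of_step (.relabelSnd _ c)),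
    hL.comp_cols b, hN.relabel c, (hO.comp_cols b).relabel_right c,
    fun j => (Equiv.ofBijective _ (hL.1 a)).apply_symm_apply j,
    fun j => (Equiv.ofBijective _ (hN.1 a)).symm_apply_apply j⟩

end General

section Cyclic

variable {k : ℕ}

theorem isLatinSquare_csq {c : ZMod k} (hc : IsUnit c) : IsLatinSquare (Csq k c) :=
  ⟨fun i => (Equiv.addRight (c * i)).bijective,
    fun j => (Equiv.addLeft j).bijective.comp (hc.unit.mulLeft : ZMod k ≃ ZMod k).bijective⟩

theorem isOrthogonal_csq {c d : ZMod k} (hcd : IsUnit (c - d)) :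
    IsOrthogonal (Csq k c) (Csq k d) := by
  refine ⟨fun ⟨i, j⟩ ⟨i', j'⟩ h => ?_, fun ⟨x, y⟩ => ?_⟩
  · simp only [Csq, Prod.mk.injEq] at h
    have hi : i = i' := hcd.mul_left_cancel (by linear_combination h.1 - h.2)
    subst hi
    simpa using h.1
  · obtain ⟨u, hu⟩ := hcd
    have hu' : (c - d) * ↑u⁻¹ = 1 := by rw [← hu, Units.mul_inv]
    refine ⟨(↑u⁻¹ * (x - y), y - d * (↑u⁻¹ * (x - y))), Prod.ext ?_ ?_⟩
    · simp only [Csq]; linear_combination (x - y) * hu'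
    · simp only [Csq]; ring

end Cyclic

theorem ZMod.three_eq_add_two_mul_of_ne {c x j : ZMod 3} (hc : c ≠ 0) (hx₀ : x ≠ j)
    (hx₁ : x ≠ j + c) : x = j + 2 * c := by
  revert c x j; decide

theorem ZMod.three_eq_add_one_or_add_two_of_injective {f : ZMod 3 → ZMod 3}
    (hf : Function.Injective f) (hfix : ∀ j, f j ≠ j) : (∀ j, f j = j + 1) ∨ ∀ j, f j = j + 2 := by
  revert f; decide

theorem IsLatinSquare.eq_csq_of_zmod_three {M : ZMod 3 → ZMod 3 → ZMod 3} (hM : IsLatinSquare M)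
    (hM₀ : ∀ j, M 0 j = j) : M = Csq 3 1 ∨ M = Csq 3 2 := by
  have hcol {i i' : ZMod 3} (j : ZMod 3) (hi : i ≠ i') : M i j ≠ M i' j :=
    fun h => hi ((hM.2 j).1 h)
  have hfix {i : ZMod 3} (j : ZMod 3) (hi : i ≠ 0) : M i j ≠ j :=
    fun h => hcol j hi (h.trans (hM₀ j).symm)
  have of_row_one {c : ZMod 3} (hc : c ≠ 0) (h₁ : ∀ j, M 1 j = j + c) : M = Csq 3 c := by
    funext i j
    have h₂ : M 2 j = j + 2 * c :=
      ZMod.three_eq_add_two_mul_of_ne hc (hfix j (by decide))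
        fun h => hcol j (by decide) (h.trans (h₁ j).symm)
    obtain rfl | rfl | rfl : i = 0 ∨ i = 1 ∨ i = 2 := by revert i; decide
    · simp [Csq, hM₀]
    · simp [Csq, h₁]
    · rw [h₂, Csq, mul_comm]
  rcases ZMod.three_eq_add_one_or_add_two_of_injective (hM.1 1).1 (hfix · one_ne_zero) with h | h
  exacts [.inl (of_row_one one_ne_zero h), .inr (of_row_one (by decide) h)]

theorem pairEquiv_csq_one_two {L L' : ZMod 3 → ZMod 3 → ZMod 3} (hL : IsLatinSquare L)
    (hL' : IsLatinSquare L') (hO : IsOrthogonal L L') :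
    PairEquiv (L, L') (Csq 3 1, Csq 3 2) := by
  obtain ⟨M, M', hLM, hM, hM', hMM', hM₀, hM'₀⟩ := exists_pairEquiv_row_eq_id hL hL' hO 0
  rcases hM.eq_csq_of_zmod_three hM₀ with rfl | rfl <;>
    rcases hM'.eq_csq_of_zmod_three hM'₀ with rfl | rfl
  · exact absurd hMM' (not_isOrthogonal_self _)
  · exact hLM
  · exact hLM.trans (PairEquiv.of_step (.swap _))
  · exact absurd hMM' (not_isOrthogonal_self _)

theorem Setoid.card_quotient_eq_one {X : Type*} {s : Setoid X} (x₀ : X) (h : ∀ x, s x x₀) :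
    Nat.card (Quotient s) = 1 :=
  Nat.card_eq_one_iff_exists.2 ⟨⟦x₀⟧, Quotient.ind fun x => Quotient.sound (h x)⟩

/-- The pair `(C₁, C₂)` of order-3 cyclic squares is orthogonal, every ordered
pair of orthogonal Latin squares of order 3 is `∼'`-equivalent to it, and hence
there is exactly one `∼'`-equivalence class of ordered pairs of orthogonal
Latin squares of order 3. (`ZMod 3` is identified with `Fin 3`.) -/
theorem ols3_classes :
    IsOrthogonal (Csq 3 1) (Csq 3 2) ∧
    (∀ L L' : Fin 3 → Fin 3 → Fin 3,
      IsLatinSquare L → IsLatinSquare L' → IsOrthogonal L L' →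
        PairEquiv (L, L') (Csq 3 1, Csq 3 2)) ∧
    Nat.card (Quotient (olsSetoid 3)) = 1 := by
  have hC : IsOrthogonal (Csq 3 1) (Csq 3 2) := isOrthogonal_csq (by decide)
  refine ⟨hC, fun L L' => pairEquiv_csq_one_two, ?_⟩
  have hC₁ : IsLatinSquare (Csq 3 1) := isLatinSquare_csq isUnit_one
  have hC₂ : IsLatinSquare (Csq 3 2) := isLatinSquare_csq (by decide)
  exact Setoid.card_quotient_eq_one ⟨(Csq 3 1, Csq 3 2), hC₁, hC₂, hC⟩
    fun P => pairEquiv_csq_one_two P.2.1 P.2.2.1 P.2.2.2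
end

section
/- Any two of the ordered pairs (L₁, L₂), (L₂, L₃), (L₃, L₁) of 4×4 Latin squares are ∼'-equivalent; in particular (L₁, L₂) ∼' (L₂, L₃) and (L₂, L₃) ∼' (L₃, L₁). -/
/-- The square `L₁` with rows (1,2,3,4),(2,1,4,3),(3,4,1,2),(4,3,2,1),
written on `Fin 4` via the identification `s ↦ s - 1` of {1,2,3,4} with Fin 4. -/
def L₁ : Fin 4 → Fin 4 → Fin 4 :=
  ![![0,1,2,3], ![1,0,3,2], ![2,3,0,1], ![3,2,1,0]]

/-- The square `L₂` with rows (1,2,3,4),(4,3,2,1),(2,1,4,3),(3,4,1,2). -/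
def L₂ : Fin 4 → Fin 4 → Fin 4 :=
  ![![0,1,2,3], ![3,2,1,0], ![1,0,3,2], ![2,3,0,1]]

/-- The square `L₃` with rows (1,2,3,4),(3,4,1,2),(4,3,2,1),(2,1,4,3). -/
def L₃ : Fin 4 → Fin 4 → Fin 4 :=
  ![![0,1,2,3], ![2,3,0,1], ![3,2,1,0], ![1,0,3,2]]

def myPerm : Equiv.Perm (Fin 4) where
  toFun := ![0, 3, 1, 2]
  invFun := ![0, 2, 3, 1]
  left_inv := by decide
  right_inv := by decide

lemma step12 :
    ((fun i j => (L₁, L₂).1 (myPerm i) j, fun i j => (L₁, L₂).2 (myPerm i) j) :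
      (Fin 4 → Fin 4 → Fin 4) × (Fin 4 → Fin 4 → Fin 4)) = (L₂, L₃) := by
  decide

lemma step23 :
    ((fun i j => (L₂, L₃).1 (myPerm i) j, fun i j => (L₂, L₃).2 (myPerm i) j) :
      (Fin 4 → Fin 4 → Fin 4) × (Fin 4 → Fin 4 → Fin 4)) = (L₃, L₁) := by
  decide

/-- Any two of the ordered pairs `(L₁, L₂)`, `(L₂, L₃)`, `(L₃, L₁)` are
`∼'`-equivalent; in particular `(L₁, L₂) ∼' (L₂, L₃)` and `(L₂, L₃) ∼' (L₃, L₁)`. -/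
theorem pairs_L1L2_L2L3_L3L1_equivalent :
    PairEquiv (L₁, L₂) (L₂, L₃) ∧ PairEquiv (L₂, L₃) (L₃, L₁) ∧
    PairEquiv (L₁, L₂) (L₃, L₁) := by
  have h1 : PairStep (L₁, L₂) (L₂, L₃) := by
    have := PairStep.rows (L₁, L₂) myPerm
    rwa [step12] at this
  have h2 : PairStep (L₂, L₃) (L₃, L₁) := by
    have := PairStep.rows (L₂, L₃) myPerm
    rwa [step23] at this
  refine ⟨Relation.EqvGen.rel _ _ h1, Relation.EqvGen.rel _ _ h2,
    Relation.EqvGen.trans _ _ _ (Relation.EqvGen.rel _ _ h1) (Relation.EqvGen.rel _ _ h2)⟩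
end

section
/- For k ≥ 3, every Latin square L ∈ G'_k satisfies L ∼ C_1 (on ZMod k); consequently any two elements of G_k are ∼-equivalent, i.e. G_k/∼ contains exactly one element. -/
lemma latinEquiv_refl {α : Type*} (L : α → α → α) : LatinEquiv L L :=
  ⟨1, 1, 1, fun i j => rfl⟩

lemma latinEquiv_symm {α : Type*} {L L' : α → α → α} (h : LatinEquiv L L') :
    LatinEquiv L' L := by
  obtain ⟨a, b, c, h⟩ := h
  refine ⟨a.symm, b.symm, c.symm, fun i j => ?_⟩
  rw [h, a.apply_symm_apply, b.apply_symm_apply, c.symm_apply_apply]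

lemma latinEquiv_trans {α : Type*} {L L' L'' : α → α → α}
    (h : LatinEquiv L L') (h' : LatinEquiv L' L'') : LatinEquiv L L'' := by
  obtain ⟨a, b, c, h⟩ := h
  obtain ⟨a', b', c', h'⟩ := h'
  exact ⟨a'.trans a, b'.trans b, c.trans c', fun i j => by
    simp [h', h, Equiv.trans_apply]⟩

lemma c1fin_latin {k : ℕ} (hk : 0 < k) : IsLatinSquare (C1fin k) := by
  have key : ∀ f : Fin k → Fin k, Function.Injective f → Function.Bijective f :=
    fun f => Finite.injective_iff_bijective.mp
  constructor
  · intro i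
    apply key
    intro j j' h
    simp only [C1fin, Fin.mk.injEq] at h
    have h2 : (j.1 : ℕ) % k = j'.1 % k := Nat.ModEq.add_right_cancel' i.1 h
    rw [Nat.mod_eq_of_lt j.isLt, Nat.mod_eq_of_lt j'.isLt] at h2
    exact Fin.ext h2
  · intro j
    apply key
    intro i i' h
    simp only [C1fin, Fin.mk.injEq] at h
    have h2 : (i.1 : ℕ) % k = i'.1 % k := Nat.ModEq.add_left_cancel' j.1 h
    rw [Nat.mod_eq_of_lt i.isLt, Nat.mod_eq_of_lt i'.isLt] at h2
    exact Fin.ext h2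

lemma c1fin_mem_gprime {k : ℕ} (hk : 3 ≤ k) : C1fin k ∈ GPrime k := by
  obtain ⟨n, rfl⟩ : ∃ n, k = n + 2 := ⟨k - 2, by omega⟩
  refine ⟨c1fin_latin (by omega), finRotate (n + 2), isCycle_finRotate, ?_, ?_⟩
  · rw [support_finRotate, Finset.card_univ, Fintype.card_fin]
  · intro i h p
    rw [finRotate_succ_apply]
    apply Fin.ext
    simp only [C1fin, Fin.add_def, Fin.val_one]
    rw [Nat.mod_add_mod, Nat.add_assoc]

lemma gprime_main {k : ℕ} (hk : 3 ≤ k) : ∀ L ∈ GPrime k, LatinEquiv L (C1fin k) := by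
  have hk0 : 0 < k := by omega
  rintro L ⟨hL, σ, hcyc, hcard, hstep⟩
  set z : Fin k := ⟨0, hk0⟩ with hz
  -- rows are powers of σ applied to row 0
  have rowpow : ∀ (i : ℕ) (hi : i < k) (p : Fin k),
      L ⟨i, hi⟩ p = (σ ^ i) (L z p) := by
    intro i
    induction i with
    | zero => intro hi p; simp [hz]
    | succ i ih =>
      intro hi p
      rw [← hstep i hi p, ih (Nat.lt_of_succ_lt hi) p, pow_succ',
        Equiv.Perm.mul_apply]
  have horder : orderOf σ = k := by rw [hcyc.orderOf, hcard]
  set x0 : Fin k := L z z with hx0def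
  have hsupp : σ.support = Finset.univ :=
    Finset.eq_univ_of_card σ.support (by rw [hcard, Fintype.card_fin])
  have hx0 : σ x0 ≠ x0 := by
    rw [← Equiv.Perm.mem_support, hsupp]; exact Finset.mem_univ _
  -- φ : m ↦ σ^m x0 is injective on Fin k
  have haux : ∀ a b : ℕ, a ≤ b → b < k → (σ ^ a) x0 = (σ ^ b) x0 → a = b := by
    intro a b hab hbk h
    by_contra hne
    have hd : 0 < b - a := by omega
    have hfix : (σ ^ (b - a)) x0 = x0 := by
      have : (σ ^ a) ((σ ^ (b - a)) x0) = (σ ^ a) x0 := by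
        rw [← Equiv.Perm.mul_apply, ← pow_add, Nat.add_sub_cancel' hab, h]
      exact (σ ^ a).injective this
    have hone : σ ^ (b - a) = 1 := hcyc.pow_eq_one_iff.mpr ⟨x0, hx0, hfix⟩
    have hdvd : orderOf σ ∣ b - a := orderOf_dvd_of_pow_eq_one hone
    rw [horder] at hdvd
    have := Nat.le_of_dvd hd hdvd
    omega
  have hφinj : Function.Injective (fun m : Fin k => (σ ^ m.1) x0) := by
    intro m m' h
    rcases le_total m.1 m'.1 with hle | hle
    · exact Fin.ext (haux m.1 m'.1 hle m'.isLt h)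
    · exact Fin.ext (haux m'.1 m.1 hle m.isLt h.symm).symm
  set e : Fin k ≃ Fin k :=
    Equiv.ofBijective _ (Finite.injective_iff_bijective.mp hφinj) with he
  set r0 : Fin k ≃ Fin k := Equiv.ofBijective (fun j => L z j) (hL.1 z) with hr0
  refine ⟨1, e.trans r0.symm, e.symm, fun i j => ?_⟩
  have h1 : L i (r0.symm (e j)) = (σ ^ i.1) (L z (r0.symm (e j))) := by
    have := rowpow i.1 i.isLt (r0.symm (e j))
    simpa using this
  have h2 : L z (r0.symm (e j)) = e j := r0.apply_symm_apply (e j)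
  have h3 : (e j : Fin k) = (σ ^ j.1) x0 := rfl
  have h4 : L i (r0.symm (e j)) = e (C1fin k i j) := by
    rw [h1, h2, h3, ← Equiv.Perm.mul_apply, ← pow_add]
    show _ = (σ ^ ((j.1 + i.1) % k)) x0
    have hpow : σ ^ ((j.1 + i.1) % orderOf σ) = σ ^ (j.1 + i.1) := pow_mod_orderOf σ _
    rw [horder] at hpow
    rw [hpow, Nat.add_comm]
  show C1fin k i j = e.symm (L i (r0.symm (e j)))
  rw [h4, e.symm_apply_apply]

/-- For `k ≥ 3`, every `L ∈ G'ₖ` satisfies `L ∼ C₁` (the cyclic square,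
written on `Fin k` via the identification with `ZMod k`); consequently `Gₖ` is
nonempty and any two of its elements are `∼`-equivalent, i.e. `Gₖ/∼` has
exactly one element. -/
theorem gprime_equiv_cyclic {k : ℕ} (hk : 3 ≤ k) :
    (∀ L ∈ GPrime k, LatinEquiv L (C1fin k)) ∧
    (GSet k).Nonempty ∧
    (∀ L ∈ GSet k, ∀ L' ∈ GSet k, LatinEquiv L L') := by
  have main := gprime_main hk
  have hmem : C1fin k ∈ GSet k := ⟨C1fin k, c1fin_mem_gprime hk, latinEquiv_refl _⟩
  refine ⟨main, ⟨C1fin k, hmem⟩, ?_⟩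
  rintro L ⟨H, hH, hLH⟩ L' ⟨H', hH', hLH'⟩
  exact latinEquiv_trans (latinEquiv_trans hLH (main H hH))
    (latinEquiv_symm (latinEquiv_trans hLH' (main H' hH')))
end

section
/- For k ≥ 3 and any Latin square L ∈ G'_k: L has a transversal if and only if L has k pairwise disjoint transversals. -/
/-- For `k ≥ 3` and `L ∈ G'ₖ`: `L` has a transversal iff `L` has `k`
pairwise disjoint transversals. -/
theorem gprime_transversal_iff_disjoint_transversals {k : ℕ} (hk : 3 ≤ k)
    (L : Fin k → Fin k → Fin k) (hL : L ∈ GPrime k) :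
    (∃ f : Equiv.Perm (Fin k), IsTransversal L f) ↔ HasDisjointTransversals L := by
  obtain ⟨hLS, σ, hcyc, hcard, hrow⟩ := hL
  have hk0 : 0 < k := by omega
  constructor
  · rintro ⟨f, hf⟩
    set z : Fin k := ⟨0, hk0⟩ with hz
    have hb : Function.Bijective fun j : Fin k => L z j := hLS.1 z
    set b : Equiv.Perm (Fin k) := Equiv.ofBijective _ hb with hbdef
    have hbap : ∀ p, b p = L z p := fun p => rfl
    -- every element is moved by σ
    have hmove : ∀ x, σ x ≠ x := by
      intro x
      have hsupp : σ.support = Finset.univ := by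
        apply Finset.eq_univ_of_card
        rw [hcard, Fintype.card_fin]
      have : x ∈ σ.support := by rw [hsupp]; exact Finset.mem_univ x
      exact Equiv.Perm.mem_support.mp this
    have horder : orderOf σ = k := by
      rw [hcyc.orderOf, hcard]
    -- rows of L are powers of σ applied to row zero
    have key : ∀ (n : ℕ) (hn : n < k) (p : Fin k), L ⟨n, hn⟩ p = (σ ^ n) (L z p) := by
      intro n
      induction n with
      | zero => intro hn p; simp [hz]
      | succ n ih =>
        intro hn p
        have hn' : n < k := by omega
        have h1 := hrow n hn p
        rw [← h1, ih hn' p, pow_succ']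
        simp [Equiv.Perm.mul_apply]
    -- conjugated permutation acting on columns
    set c : Equiv.Perm (Fin k) := (b.trans σ).trans b.symm with hcdef
    have hcb : ∀ p, b (c p) = σ (b p) := by
      intro p; simp [hcdef]
    have hcn : ∀ (n : ℕ) (p : Fin k), b ((c ^ n) p) = (σ ^ n) (b p) := by
      intro n
      induction n with
      | zero => intro p; simp
      | succ n ih =>
        intro p
        rw [pow_succ, pow_succ, Equiv.Perm.mul_apply, Equiv.Perm.mul_apply, ih (c p), hcb]
    have comm : ∀ (a b' : ℕ) (y : Fin k), (σ ^ a) ((σ ^ b') y) = (σ ^ b') ((σ ^ a) y) := by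
      intro a b' y
      have hcm : σ ^ a * σ ^ b' = σ ^ b' * σ ^ a := by
        rw [← pow_add, ← pow_add, Nat.add_comm]
      calc (σ ^ a) ((σ ^ b') y) = (σ ^ a * σ ^ b') y := rfl
        _ = (σ ^ b' * σ ^ a) y := by rw [hcm]
        _ = _ := rfl
    refine ⟨fun m => f.trans (c ^ m.val), ?_, ?_⟩
    · intro m
      have hval : ∀ i : Fin k, L i ((f.trans (c ^ m.val)) i) = (σ ^ m.val) (L i (f i)) := by
        intro i
        have hi := i.isLt
        have e1 : L i ((c ^ m.val) (f i)) = (σ ^ i.val) (L z ((c ^ m.val) (f i))) := by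
          conv_lhs => rw [show i = (⟨i.val, hi⟩ : Fin k) from rfl]
          exact key i.val hi _
        have e2 : L i (f i) = (σ ^ i.val) (L z (f i)) := by
          conv_lhs => rw [show i = (⟨i.val, hi⟩ : Fin k) from rfl]
          exact key i.val hi _
        simp only [Equiv.trans_apply]
        rw [e1, e2, ← hbap, ← hbap, hcn, comm]
      intro i j hij
      simp only [hval] at hij
      exact hf ((σ ^ m.val).injective hij)
    · intro m m' hmm i hTeq
      simp only [Equiv.trans_apply] at hTeq
      have hb' : (σ ^ m.val) (b (f i)) = (σ ^ m'.val) (b (f i)) := by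
        rw [← hcn, ← hcn, hTeq]
      -- derive contradiction: σ^d fixes a point for 0 < d < k
      have main : ∀ a b' : ℕ, a < b' → b' < k → ∀ y : Fin k,
          (σ ^ a) y = (σ ^ b') y → False := by
        intro a b' hab hb'k y hy
        have hd : (σ ^ (b' - a)) ((σ ^ a) y) = (σ ^ a) y := by
          rw [← Equiv.Perm.mul_apply, ← pow_add, Nat.sub_add_cancel (le_of_lt hab), ← hy]
        have hne : σ ((σ ^ a) y) ≠ (σ ^ a) y := hmove _
        have hone : σ ^ (b' - a) = 1 := by
          rw [hcyc.pow_eq_one_iff]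
          exact ⟨(σ ^ a) y, hne, hd⟩
        have hdvd : orderOf σ ∣ (b' - a) := orderOf_dvd_of_pow_eq_one hone
        rw [horder] at hdvd
        have : b' - a = 0 := Nat.eq_zero_of_dvd_of_lt hdvd (by omega)
        omega
      have hmval : m.val ≠ m'.val := fun h => hmm (Fin.ext h)
      rcases lt_or_gt_of_ne hmval with h | h
      · exact main m.val m'.val h m'.isLt _ hb'
      · exact main m'.val m.val h m.isLt _ hb'.symm
  · rintro ⟨T, hT, _⟩
    exact ⟨T ⟨0, hk0⟩, hT _⟩
end

section
/- If k ≥ 3 is even and L ∈ G_k, then no Latin square of order k is orthogonal to L, i.e. L has no orthogonal mate. -/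
section Aux

variable {k : ℕ}

/-- An orthogonal mate yields a transversal. -/
lemma transversal_of_mate (hk : 0 < k) (L L' : Fin k → Fin k → Fin k)
    (hL' : IsLatinSquare L') (horth : IsOrthogonal L L') :
    ∃ f : Equiv.Perm (Fin k), IsTransversal L f := by
  classical
  set s : Fin k := ⟨0, hk⟩
  set f : Fin k → Fin k := fun i => (Equiv.ofBijective _ (hL'.1 i)).symm s with hf
  have hfs : ∀ i, L' i (f i) = s := fun i =>
    (Equiv.ofBijective _ (hL'.1 i)).apply_symm_apply s
  have hinj : Function.Injective f := by
    intro i i' h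
    exact (hL'.2 (f i)).injective (by simpa [h, hfs i'] using hfs i)
  refine ⟨Equiv.ofBijective f (Finite.injective_iff_bijective.mp hinj), ?_⟩
  intro i i' h
  have : ((fun p : Fin k × Fin k => (L p.1 p.2, L' p.1 p.2)) (i, f i)) =
      ((fun p : Fin k × Fin k => (L p.1 p.2, L' p.1 p.2)) (i', f i')) := by
    simp only [Prod.mk.injEq]
    exact ⟨h, by rw [hfs, hfs]⟩
  exact congrArg Prod.fst (horth.injective this)

/-- Transversals transfer through `LatinEquiv`. -/
lemma transversal_of_latinEquiv {L H : Fin k → Fin k → Fin k}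
    (hEq : LatinEquiv L H) (f : Equiv.Perm (Fin k)) (hf : IsTransversal L f) :
    ∃ g : Equiv.Perm (Fin k), IsTransversal H g := by
  obtain ⟨a, b, c, hc⟩ := hEq
  refine ⟨a.trans (f.trans b.symm), ?_⟩
  intro i i' h
  simp only [Equiv.trans_apply] at h
  rw [hc, hc, Equiv.apply_symm_apply, Equiv.apply_symm_apply] at h
  exact a.injective (hf (c.injective h))

/-- No square in `G'_k` has a transversal when `k ≥ 3` is even. -/
lemma gprime_no_transversal (hk : 3 ≤ k) (heven : Even k)
    {H : Fin k → Fin k → Fin k} (hH : H ∈ GPrime k)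
    (g : Equiv.Perm (Fin k)) (hg : IsTransversal H g) : False := by
  classical
  obtain ⟨hHlat, σ, hcyc, hcard, hrow⟩ := hH
  have hk0 : 0 < k := by omega
  haveI : NeZero k := ⟨by omega⟩
  haveI : Fact (1 < k) := ⟨by omega⟩
  set h0 : Fin k → Fin k := H ⟨0, hk0⟩ with hh0
  -- rows are powers of σ applied to row 0
  have rowpow : ∀ (n : ℕ) (hn : n < k) (p : Fin k), H ⟨n, hn⟩ p = (σ ^ n) (h0 p) := by
    intro n
    induction n with
    | zero => intro hn p; simp [hh0]
    | succ m ih =>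
      intro hn p
      rw [← hrow m hn p, ih (Nat.lt_of_succ_lt hn) p, pow_succ' σ m, Equiv.Perm.mul_apply]
  have rowpow' : ∀ (i : Fin k) (p : Fin k), H i p = (σ ^ i.val) (h0 p) := by
    intro i p
    have := rowpow i.val i.isLt p
    simpa using this
  -- σ moves everything, has order k
  have hsupp : σ.support = Finset.univ :=
    Finset.eq_univ_of_card σ.support (hcard.trans (Fintype.card_fin k).symm)
  have hmove : ∀ x : Fin k, σ x ≠ x := fun x =>
    Equiv.Perm.mem_support.mp (hsupp ▸ Finset.mem_univ x)
  have horder : orderOf σ = k := hcyc.orderOf.trans hcard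
  -- conjugating equiv:  e' : ZMod k → Fin k
  set x0 : Fin k := ⟨0, hk0⟩
  set e' : ZMod k → Fin k := fun n => (σ ^ n.val) x0 with he'
  have hsurj : Function.Surjective e' := by
    intro y
    obtain ⟨i, hi⟩ := hcyc.exists_pow_eq (hmove x0) (hmove y)
    refine ⟨(i : ZMod k), ?_⟩
    have hp := pow_mod_orderOf σ i
    rw [horder] at hp
    have : σ ^ ((i : ZMod k)).val = σ ^ i := by rw [ZMod.val_natCast, hp]
    rw [he']; simp only; rw [this, hi]
  have hbij : Function.Bijective e' := by
    rw [Fintype.bijective_iff_surjective_and_card]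
    exact ⟨hsurj, by rw [ZMod.card, Fintype.card_fin]⟩
  set E : ZMod k ≃ Fin k := Equiv.ofBijective e' hbij with hE
  have hEapp : ∀ n : ZMod k, E n = (σ ^ n.val) x0 := fun n => rfl
  have e'succ : ∀ n : ZMod k, E (n + 1) = σ (E n) := by
    intro n
    rw [hEapp, hEapp]
    have hval : (n + 1 : ZMod k).val = (n.val + 1) % k := by
      rw [ZMod.val_add, ZMod.val_one]
    have hp := pow_mod_orderOf σ (n.val + 1)
    rw [horder] at hp
    rw [hval, hp, pow_succ' σ, Equiv.Perm.mul_apply]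
  have step : ∀ x : Fin k, E.symm (σ x) = E.symm x + 1 := by
    intro x
    apply E.injective
    rw [Equiv.apply_symm_apply, e'succ, Equiv.apply_symm_apply]
  have steppow : ∀ (m : ℕ) (x : Fin k), E.symm ((σ ^ m) x) = E.symm x + (m : ZMod k) := by
    intro m
    induction m with
    | zero => intro x; simp
    | succ n ih =>
      intro x
      rw [pow_succ σ n, Equiv.Perm.mul_apply, ih, step]
      push_cast
      ring
  -- the two bijections and the sum argument
  have h0inj : Function.Injective h0 := (hHlat.1 ⟨0, hk0⟩).injective
  set φ : Fin k → ZMod k := fun i => E.symm (H i (g i)) with hφ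
  set ψ : Fin k → ZMod k := fun i => E.symm (h0 (g i)) with hψ
  have hφinj : Function.Injective φ := fun i i' h => hg (E.symm.injective h)
  have hψinj : Function.Injective ψ := fun i i' h =>
    g.injective (h0inj (E.symm.injective h))
  have hφbij : Function.Bijective φ :=
    (Fintype.bijective_iff_injective_and_card φ).mpr
      ⟨hφinj, by rw [Fintype.card_fin, ZMod.card]⟩
  have hψbij : Function.Bijective ψ :=
    (Fintype.bijective_iff_injective_and_card ψ).mpr
      ⟨hψinj, by rw [Fintype.card_fin, ZMod.card]⟩
  have hφψ : ∀ i : Fin k, φ i = ψ i + (i.val : ZMod k) := by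
    intro i
    rw [hφ, hψ]
    simp only
    rw [rowpow' i (g i), steppow]
  have hsumφ : ∑ i : Fin k, φ i = ∑ z : ZMod k, z :=
    Fintype.sum_bijective φ hφbij _ _ (fun _ => rfl)
  have hsumψ : ∑ i : Fin k, ψ i = ∑ z : ZMod k, z :=
    Fintype.sum_bijective ψ hψbij _ _ (fun _ => rfl)
  have hzero : (∑ i : Fin k, ((i.val : ℕ) : ZMod k)) = 0 := by
    have := hsumφ
    rw [Finset.sum_congr rfl (fun i _ => hφψ i), Finset.sum_add_distrib, hsumψ] at this
    exact (left_eq_add.mp this.symm)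
  -- compute the sum of residues
  have hcast : (∑ i : Fin k, ((i.val : ℕ) : ZMod k)) = ((∑ i : Fin k, i.val : ℕ) : ZMod k) := by
    push_cast
    rfl
  have hdvd : k ∣ ∑ i : Fin k, i.val := by
    rw [← ZMod.natCast_eq_zero_iff, ← hcast]
    exact hzero
  rw [Fin.sum_univ_eq_sum_range (fun i => i) k] at hdvd
  obtain ⟨t, ht⟩ := hdvd
  have hgauss := Finset.sum_range_id_mul_two k
  rw [ht] at hgauss
  have ht2 : t * 2 = k - 1 := by
    have hk' : k * (t * 2) = k * (k - 1) := by rw [← hgauss]; ring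
    exact Nat.eq_of_mul_eq_mul_left hk0 hk'
  obtain ⟨m, hm⟩ := heven
  omega

end Aux

/-- If `k ≥ 3` is even and `L ∈ Gₖ`, then `L` has no orthogonal mate. -/
theorem gset_no_orthogonal_mate_of_even {k : ℕ} (hk : 3 ≤ k) (heven : Even k)
    (L : Fin k → Fin k → Fin k) (hL : L ∈ GSet k) :
    ¬ ∃ L' : Fin k → Fin k → Fin k, IsLatinSquare L' ∧ IsOrthogonal L L' := by
  classical
  obtain ⟨H, hHG, hEq⟩ := hL
  rintro ⟨L', hL'lat, horth⟩
  obtain ⟨f, hf⟩ := transversal_of_mate (by omega) L L' hL'lat horth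
  obtain ⟨g, hg⟩ := transversal_of_latinEquiv hEq f hf
  exact gprime_no_transversal hk heven hHG g hg
end

section
/- Let L be a Latin square of order 5 such that the permutation σ^L_{01} between its first two rows equals the permutation of Fin 5 that swaps the symbols 0 and 1 and cyclically permutes 2 → 3 → 4 → 2 (i.e. the permutation (12)(345)). Then there do not exist 5 pairwise disjoint transversals of L. -/
/-! ### Auxiliary machinery for the final theorem -/

namespace NoDT

abbrev Q5 := Fin 5 × Fin 5 × Fin 5 × Fin 5 × Fin 5

def look (q : Q5) : Fin 5 → Fin 5 := ![q.1, q.2.1, q.2.2.1, q.2.2.2.1, q.2.2.2.2]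

def tupOf (f : Fin 5 → Fin 5) : Q5 := (f 0, f 1, f 2, f 3, f 4)

lemma look_tupOf (f : Fin 5 → Fin 5) (i : Fin 5) : look (tupOf f) i = f i := by
  fin_cases i <;> rfl

def r5 : List (Fin 5) := [0,1,2,3,4]

def allQ : List Q5 :=
  r5.flatMap fun a => r5.flatMap fun b => r5.flatMap fun c => r5.flatMap fun d =>
    r5.map fun e => (a,b,c,d,e)

def distinct5 (a b c d e : Fin 5) : Bool :=
  a != b && a != c && a != d && a != e && b != c && b != d && b != e &&
  c != d && c != e && d != e

def permQ : List Q5 := allQ.filter fun q => distinct5 q.1 q.2.1 q.2.2.1 q.2.2.2.1 q.2.2.2.2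

def q0 : Q5 := (0,1,2,3,4)
def q1 : Q5 := (1,0,3,4,2)

def sqf (v2 v3 v4 : Q5) (i j : Fin 5) : Fin 5 := look (![q0, q1, v2, v3, v4] i) j

def all5 (p : Fin 5 → Bool) : Bool := p 0 && p 1 && p 2 && p 3 && p 4

def compat2 (v2 : Q5) : Bool :=
  all5 fun j => look v2 j != look q0 j && look v2 j != look q1 j
def compat3 (v2 v3 : Q5) : Bool :=
  all5 fun j => look v3 j != look q0 j && look v3 j != look q1 j && look v3 j != look v2 j
def compat4 (v2 v3 v4 : Q5) : Bool :=
  all5 fun j => look v4 j != look q0 j && look v4 j != look q1 j &&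
    look v4 j != look v2 j && look v4 j != look v3 j

def transB (v2 v3 v4 t : Q5) : Bool :=
  distinct5 (sqf v2 v3 v4 0 (look t 0)) (sqf v2 v3 v4 1 (look t 1))
    (sqf v2 v3 v4 2 (look t 2)) (sqf v2 v3 v4 3 (look t 3)) (sqf v2 v3 v4 4 (look t 4))

def disjB (t t' : Q5) : Bool := all5 fun i => look t i != look t' i

def noFive (v2 v3 v4 : Q5) : Bool :=
  let ts := permQ.filter (transB v2 v3 v4)
  !(ts.any fun t0 => ts.any fun t1 => disjB t0 t1 &&
     ts.any fun t2 => disjB t0 t2 && disjB t1 t2 &&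
      ts.any fun t3 => disjB t0 t3 && disjB t1 t3 && disjB t2 t3 &&
       ts.any fun t4 => disjB t0 t4 && disjB t1 t4 && disjB t2 t4 && disjB t3 t4)

def mainB : Bool :=
  permQ.all fun v2 => !compat2 v2 ||
   permQ.all fun v3 => !compat3 v2 v3 ||
    permQ.all fun v4 => !compat4 v2 v3 v4 || noFive v2 v3 v4

set_option maxRecDepth 100000 in
set_option maxHeartbeats 8000000 in
theorem mainB_true : mainB = true := by decide

lemma mem_allQ (q : Q5) : q ∈ allQ := by
  obtain ⟨a, b, c, d, e⟩ := q
  have h : ∀ x : Fin 5, x ∈ r5 := by decide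
  simp only [allQ, List.mem_flatMap, List.mem_map]
  exact ⟨a, h a, b, h b, c, h c, d, h d, e, h e, rfl⟩

lemma distinct5_of {a b c d e : Fin 5} (h1 : a ≠ b) (h2 : a ≠ c) (h3 : a ≠ d)
    (h4 : a ≠ e) (h5 : b ≠ c) (h6 : b ≠ d) (h7 : b ≠ e) (h8 : c ≠ d) (h9 : c ≠ e)
    (h10 : d ≠ e) : distinct5 a b c d e = true := by
  simp_all [distinct5, bne_iff_ne]

lemma mem_permQ (f : Fin 5 → Fin 5) (hf : Function.Injective f) : tupOf f ∈ permQ := by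
  refine List.mem_filter.2 ⟨mem_allQ _, ?_⟩
  show distinct5 (f 0) (f 1) (f 2) (f 3) (f 4) = true
  exact distinct5_of
    (fun h => absurd (hf h) (by decide)) (fun h => absurd (hf h) (by decide))
    (fun h => absurd (hf h) (by decide)) (fun h => absurd (hf h) (by decide))
    (fun h => absurd (hf h) (by decide)) (fun h => absurd (hf h) (by decide))
    (fun h => absurd (hf h) (by decide)) (fun h => absurd (hf h) (by decide))
    (fun h => absurd (hf h) (by decide)) (fun h => absurd (hf h) (by decide))

lemma all5_of {p : Fin 5 → Bool} (h : ∀ i, p i = true) : all5 p = true := by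
  simp [all5, h]

lemma allE {l : List Q5} {p : Q5 → Bool} (h : l.all p = true) {q : Q5} (hq : q ∈ l) :
    p q = true := List.all_eq_true.1 h q hq

lemma orE {a b : Bool} (h : (!a || b) = true) (ha : a = true) : b = true := by
  cases a <;> cases b <;> simp_all

lemma look_q0 (j : Fin 5) : look q0 j = j := by fin_cases j <;> rfl

lemma look_q1 (x : Fin 5) :
    look q1 x = (Equiv.swap (0 : Fin 5) 1 * Equiv.swap 2 3 * Equiv.swap 3 4 :
      Equiv.Perm (Fin 5)) x := by fin_cases x <;> rfl

end NoDT

/-- If the permutation between the first two rows of a Latin square `L` of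
order 5 is `(0 1)(2 3 4)` (the permutation written `(12)(345)` in the paper:
it swaps the symbols 0 and 1 and cyclically permutes 2 → 3 → 4 → 2), then `L`
does not have 5 pairwise disjoint transversals. -/

theorem no_disjoint_transversals_of_sigma12 (L : Fin 5 → Fin 5 → Fin 5)
    (hL : IsLatinSquare L)
    (hσ : ∀ p, (Equiv.swap (0 : Fin 5) 1 * Equiv.swap 2 3 * Equiv.swap 3 4 :
        Equiv.Perm (Fin 5)) (L 0 p) = L 1 p) :
    ¬ HasDisjointTransversals L := by
  rintro ⟨T, hT, hdisj⟩
  open NoDT in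
  -- Normalize columns so that row 0 becomes the identity.
  let e : Fin 5 ≃ Fin 5 := Equiv.ofBijective (fun j => L 0 j) (hL.1 0)
  have key1 : ∀ j, L 0 (e.symm j) = j := fun j => e.apply_symm_apply j
  -- row tuples
  let f2 : Fin 5 → Fin 5 := fun j => L 2 (e.symm j)
  let f3 : Fin 5 → Fin 5 := fun j => L 3 (e.symm j)
  let f4 : Fin 5 → Fin 5 := fun j => L 4 (e.symm j)
  let v2 : Q5 := tupOf f2
  let v3 : Q5 := tupOf f3
  let v4 : Q5 := tupOf f4
  -- the normalized square agrees with L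
  have hsq : ∀ i j, sqf v2 v3 v4 i j = L i (e.symm j) := by
    intro i j
    fin_cases i
    · show look q0 j = L 0 (e.symm j)
      rw [key1, look_q0]
    · show look q1 j = L 1 (e.symm j)
      rw [look_q1, ← hσ (e.symm j), key1]
    · exact look_tupOf f2 j
    · exact look_tupOf f3 j
    · exact look_tupOf f4 j
  -- distinct rows give distinct symbols in each column
  have hne : ∀ (i i' : Fin 5), i ≠ i' → ∀ j, sqf v2 v3 v4 i j ≠ sqf v2 v3 v4 i' j := by
    intro i i' hii j h
    rw [hsq, hsq] at h
    exact hii ((hL.2 (e.symm j)).injective h)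
  -- compatibility booleans hold
  have hc2 : compat2 v2 = true := all5_of fun j => by
    have h1 : sqf v2 v3 v4 2 j ≠ sqf v2 v3 v4 0 j := hne 2 0 (by decide) j
    have h2 : sqf v2 v3 v4 2 j ≠ sqf v2 v3 v4 1 j := hne 2 1 (by decide) j
    simp only [Bool.and_eq_true, bne_iff_ne]
    exact ⟨h1, h2⟩
  have hc3 : compat3 v2 v3 = true := all5_of fun j => by
    have h1 : sqf v2 v3 v4 3 j ≠ sqf v2 v3 v4 0 j := hne 3 0 (by decide) j
    have h2 : sqf v2 v3 v4 3 j ≠ sqf v2 v3 v4 1 j := hne 3 1 (by decide) j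
    have h3 : sqf v2 v3 v4 3 j ≠ sqf v2 v3 v4 2 j := hne 3 2 (by decide) j
    simp only [Bool.and_eq_true, bne_iff_ne]
    exact ⟨⟨h1, h2⟩, h3⟩
  have hc4 : compat4 v2 v3 v4 = true := all5_of fun j => by
    have h1 : sqf v2 v3 v4 4 j ≠ sqf v2 v3 v4 0 j := hne 4 0 (by decide) j
    have h2 : sqf v2 v3 v4 4 j ≠ sqf v2 v3 v4 1 j := hne 4 1 (by decide) j
    have h3 : sqf v2 v3 v4 4 j ≠ sqf v2 v3 v4 2 j := hne 4 2 (by decide) j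
    have h4 : sqf v2 v3 v4 4 j ≠ sqf v2 v3 v4 3 j := hne 4 3 (by decide) j
    simp only [Bool.and_eq_true, bne_iff_ne]
    exact ⟨⟨⟨h1, h2⟩, h3⟩, h4⟩
  -- row membership in the permutation list
  have hm2 : v2 ∈ permQ := mem_permQ f2 ((hL.1 2).injective.comp e.symm.injective)
  have hm3 : v3 ∈ permQ := mem_permQ f3 ((hL.1 3).injective.comp e.symm.injective)
  have hm4 : v4 ∈ permQ := mem_permQ f4 ((hL.1 4).injective.comp e.symm.injective)
  -- transversal tuples
  let t : Fin 5 → Fin 5 → Fin 5 := fun m i => e (T m i)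
  let w : Fin 5 → Q5 := fun m => tupOf (t m)
  have hsval : ∀ m i, sqf v2 v3 v4 i (look (w m) i) = L i (T m i) := by
    intro m i
    rw [look_tupOf, hsq]
    show L i (e.symm (e (T m i))) = L i (T m i)
    rw [Equiv.symm_apply_apply]
  have htB : ∀ m, transB v2 v3 v4 (w m) = true := by
    intro m
    show distinct5 _ _ _ _ _ = true
    rw [hsval m 0, hsval m 1, hsval m 2, hsval m 3, hsval m 4]
    exact distinct5_of
      (fun h => absurd (hT m h) (by decide)) (fun h => absurd (hT m h) (by decide))
      (fun h => absurd (hT m h) (by decide)) (fun h => absurd (hT m h) (by decide))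
      (fun h => absurd (hT m h) (by decide)) (fun h => absurd (hT m h) (by decide))
      (fun h => absurd (hT m h) (by decide)) (fun h => absurd (hT m h) (by decide))
      (fun h => absurd (hT m h) (by decide)) (fun h => absurd (hT m h) (by decide))
  have hwmem : ∀ m, w m ∈ permQ.filter (transB v2 v3 v4) := fun m =>
    List.mem_filter.2 ⟨mem_permQ (t m) (e.injective.comp (T m).injective), htB m⟩
  have hdB : ∀ m m', m ≠ m' → disjB (w m) (w m') = true := by
    intro m m' hmm
    refine all5_of fun i => ?_
    rw [show (look (w m) i != look (w m') i) = (t m i != t m' i) by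
      rw [look_tupOf, look_tupOf]]
    exact bne_iff_ne.2 fun h => hdisj m m' hmm i (e.injective h)
  -- extract the core computational fact
  have H2 : (permQ.all fun v3' =>
      !compat3 v2 v3' || permQ.all fun v4' =>
        !compat4 v2 v3' v4' || noFive v2 v3' v4') = true :=
    orE (allE mainB_true hm2) hc2
  have H3 : (permQ.all fun v4' =>
      !compat4 v2 v3 v4' || noFive v2 v3 v4') = true :=
    orE (allE H2 hm3) hc3
  have H4 : noFive v2 v3 v4 = true := orE (allE H3 hm4) hc4
  -- but the five transversals witness the contrary
  have hany : (permQ.filter (transB v2 v3 v4)).any (fun t0 =>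
      (permQ.filter (transB v2 v3 v4)).any fun t1 => disjB t0 t1 &&
       (permQ.filter (transB v2 v3 v4)).any fun t2 => disjB t0 t2 && disjB t1 t2 &&
        (permQ.filter (transB v2 v3 v4)).any fun t3 =>
          disjB t0 t3 && disjB t1 t3 && disjB t2 t3 &&
         (permQ.filter (transB v2 v3 v4)).any fun t4 =>
           disjB t0 t4 && disjB t1 t4 && disjB t2 t4 && disjB t3 t4) = true := by
    refine List.any_eq_true.2 ⟨w 0, hwmem 0, ?_⟩
    refine List.any_eq_true.2 ⟨w 1, hwmem 1, ?_⟩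
    simp only [Bool.and_eq_true]
    refine ⟨hdB 0 1 (by decide), ?_⟩
    refine List.any_eq_true.2 ⟨w 2, hwmem 2, ?_⟩
    simp only [Bool.and_eq_true]
    refine ⟨⟨hdB 0 2 (by decide), hdB 1 2 (by decide)⟩, ?_⟩
    refine List.any_eq_true.2 ⟨w 3, hwmem 3, ?_⟩
    simp only [Bool.and_eq_true]
    refine ⟨⟨⟨hdB 0 3 (by decide), hdB 1 3 (by decide)⟩, hdB 2 3 (by decide)⟩, ?_⟩
    refine List.any_eq_true.2 ⟨w 4, hwmem 4, ?_⟩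
    simp only [Bool.and_eq_true]
    exact ⟨⟨⟨hdB 0 4 (by decide), hdB 1 4 (by decide)⟩, hdB 2 4 (by decide)⟩,
      hdB 3 4 (by decide)⟩
  have H4' : (!(permQ.filter (transB v2 v3 v4)).any (fun t0 =>
      (permQ.filter (transB v2 v3 v4)).any fun t1 => disjB t0 t1 &&
       (permQ.filter (transB v2 v3 v4)).any fun t2 => disjB t0 t2 && disjB t1 t2 &&
        (permQ.filter (transB v2 v3 v4)).any fun t3 =>
          disjB t0 t3 && disjB t1 t3 && disjB t2 t3 &&
         (permQ.filter (transB v2 v3 v4)).any fun t4 =>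
           disjB t0 t4 && disjB t1 t4 && disjB t2 t4 && disjB t3 t4)) = true := H4
  rw [hany] at H4'
  exact absurd H4' (by decide)
end

section
/- On ZMod 5, the ordered pairs of Latin squares (C_1, C_3) and (C_1, C_2) are ∼'-equivalent. -/
/-- On `ZMod 5`, the ordered pairs `(C₁, C₃)` and `(C₁, C₂)` are `∼'`-equivalent. -/
theorem pair_C1C3_equiv_C1C2 :
    PairEquiv (Csq 5 1, Csq 5 3) (Csq 5 1, Csq 5 2) := by
  have hne : (2 : ZMod 5) ≠ 0 := by decide
  have h6 : (6 : ZMod 5) = 1 := by decide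
  haveI : Fact (Nat.Prime 5) := ⟨by norm_num⟩
  have h1 : PairStep (Csq 5 1, Csq 5 3) (Csq 5 2, Csq 5 1) := by
    have := PairStep.rows (Csq 5 1, Csq 5 3) (Equiv.mulLeft₀ (2 : ZMod 5) hne)
    convert this using 2 <;> funext i j <;> simp [Csq, Equiv.mulLeft₀] <;> ring_nf <;>
      rw [h6, mul_one]
  have h2 : PairStep ((Csq 5 2, Csq 5 1) : _ × _) (Csq 5 1, Csq 5 2) :=
    PairStep.swap _
  exact Relation.EqvGen.trans _ _ _ (Relation.EqvGen.rel _ _ h1) (Relation.EqvGen.rel _ _ h2)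
end
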